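/- Let A ∈ ℝ^{2n×2n} be symmetric positive definite, partitioned into n×n blocks as A = [[A₁₁, A₁₂],[A₁₂ᵀ, A₂₂]], let S := A₂₂ − A₁₂ᵀ A₁₁⁻¹ A₁₂ and W := A₁₁⁻¹A₁₂. Then ‖A₁₁⁻¹ − S‖₂ ≤ ‖A₁₁⁻¹‖₂ · (‖W‖₂ + 1) · ‖Ω(A)‖₂, where Ω(A) := AᵀJA − J. -/

import Mathlib

open Matrix

/-- Spectral norm (ℓ² operator norm) of a real square matrix. -/
noncomputable def specNorm {m : Type*} [Fintype m] [DecidableEq m] (M : Matrix m m ℝ) : ℝ :=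
  ‖LinearMap.toContinuousLinearMap (Matrix.toEuclideanLin M)‖

/-- Frobenius norm of a real square matrix. -/
noncomputable def frobNorm {m : Type*} [Fintype m] (M : Matrix m m ℝ) : ℝ :=
  Real.sqrt (∑ i, ∑ j, (M i j) ^ 2)

/-- Spectral condition number κ₂(M) = ‖M⁻¹‖₂ ‖M‖₂. -/
noncomputable def cond2 {m : Type*} [Fintype m] [DecidableEq m] (M : Matrix m m ℝ) : ℝ :=
  specNorm M⁻¹ * specNorm M

/-- Spectral radius of a real square matrix (via its complex spectrum). -/
noncomputable def specRad {m : Type*} [Fintype m] [DecidableEq m] (M : Matrix m m ℝ) : ℝ :=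
  (spectralRadius ℂ (M.map (Complex.ofReal ·))).toReal

/-- Lower triangular predicate. -/
def LowerTri {k : ℕ} (M : Matrix (Fin k) (Fin k) ℝ) : Prop := ∀ i j, i < j → M i j = 0
/-- Upper triangular predicate. -/
def UpperTri {k : ℕ} (M : Matrix (Fin k) (Fin k) ℝ) : Prop := ∀ i j, j < i → M i j = 0
/-- Positive diagonal entries predicate. -/
def PosDiag {k : ℕ} (M : Matrix (Fin k) (Fin k) ℝ) : Prop := ∀ i, 0 < M i i

/-- The standard symplectic matrix J = [[0, I], [-I, 0]]. -/
noncomputable def Jmat (n : ℕ) : Matrix (Fin n ⊕ Fin n) (Fin n ⊕ Fin n) ℝ :=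
  fromBlocks 0 1 (-1) 0

/-- M is symplectic iff MᵀJM = J. -/
def IsSymplectic {n : ℕ} (M : Matrix (Fin n ⊕ Fin n) (Fin n ⊕ Fin n) ℝ) : Prop :=
  Mᵀ * Jmat n * M = Jmat n

/-- Ω(M) = MᵀJM − J, the loss of symplecticity. -/
noncomputable def Omega {n : ℕ} (M : Matrix (Fin n ⊕ Fin n) (Fin n ⊕ Fin n) ℝ) :
    Matrix (Fin n ⊕ Fin n) (Fin n ⊕ Fin n) ℝ :=
  Mᵀ * Jmat n * M - Jmat n

/-!
For symmetric `A`, the blocks of `Ω(A)` are `Ω₁₁ = A₁₁A₁₂ᵀ - A₁₂A₁₁` and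
`Ω₂₁ = A₁₂ᵀA₁₂ᵀ - A₂₂A₁₁ + I`, and expanding with `A₁₁⁻¹A₁₁ = A₁₁A₁₁⁻¹ = I` gives
`A₁₁⁻¹ - S = (Ω₂₁ - Wᵀ Ω₁₁) A₁₁⁻¹`. A block of a matrix has spectral norm at most that of the
whole matrix, and `‖Wᵀ‖₂ = ‖W‖₂`, so submultiplicativity gives the bound.
-/

open scoped Matrix.Norms.L2Operator

namespace Matrix

variable {𝕜 : Type*} [RCLike 𝕜] {k l m n : Type*}
  [Fintype k] [Fintype l] [Fintype m] [Fintype n]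

lemma l2_opNorm_one_le [DecidableEq n] : ‖(1 : Matrix n n 𝕜)‖ ≤ 1 := by
  rw [← diagonal_one, l2_opNorm_diagonal]
  exact pi_norm_le_iff_of_nonneg zero_le_one |>.mpr fun _ => by simp

lemma l2_opNorm_one_submatrix_le [DecidableEq k] [DecidableEq n] {e : k → n}
    (he : Function.Injective e) : ‖(1 : Matrix n n 𝕜).submatrix e id‖ ≤ 1 := by
  set P := (1 : Matrix n n 𝕜).submatrix e id
  have hP : (Pᴴ)ᴴ * Pᴴ = 1 := by
    rw [conjTranspose_conjTranspose, conjTranspose_submatrix, conjTranspose_one,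
      ← submatrix_mul _ _ _ _ _ Function.bijective_id, Matrix.mul_one, submatrix_one e he]
  have := l2_opNorm_conjTranspose_mul_self Pᴴ
  rw [hP, l2_opNorm_conjTranspose] at this
  nlinarith [norm_nonneg P, l2_opNorm_one_le (𝕜 := 𝕜) (n := k)]

lemma l2_opNorm_submatrix_le [DecidableEq k] [DecidableEq l] [DecidableEq m] [DecidableEq n]
    (M : Matrix m n 𝕜) {e : k → m} {f : l → n}
    (he : Function.Injective e) (hf : Function.Injective f) : ‖M.submatrix e f‖ ≤ ‖M‖ := by
  have hM : M.submatrix e f =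
      (1 : Matrix m m 𝕜).submatrix e id * M * ((1 : Matrix n n 𝕜).submatrix f id)ᴴ := by
    rw [conjTranspose_submatrix, conjTranspose_one, ← submatrix_id_id M,
      ← submatrix_mul _ _ _ _ _ Function.bijective_id,
      ← submatrix_mul _ _ _ _ _ Function.bijective_id, Matrix.one_mul, Matrix.mul_one,
      submatrix_id_id]
  calc ‖M.submatrix e f‖
      ≤ ‖(1 : Matrix m m 𝕜).submatrix e id‖ * ‖M‖ * ‖((1 : Matrix n n 𝕜).submatrix f id)ᴴ‖ := by
        rw [hM]
        exact (l2_opNorm_mul _ _).trans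
          (mul_le_mul_of_nonneg_right (l2_opNorm_mul _ _) (norm_nonneg _))
    _ ≤ 1 * ‖M‖ * 1 := by
        rw [l2_opNorm_conjTranspose]
        gcongr
        · exact l2_opNorm_one_submatrix_le he
        · exact l2_opNorm_one_submatrix_le hf
    _ = ‖M‖ := by ring

end Matrix

lemma specNorm_eq_l2_opNorm {m : Type*} [Fintype m] [DecidableEq m] (M : Matrix m m ℝ) :
    specNorm M = ‖M‖ :=
  rfl

lemma Omega_fromBlocks {n : ℕ} (A B C D : Matrix (Fin n) (Fin n) ℝ) :
    Omega (fromBlocks A B C D) =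
      fromBlocks (Aᵀ * C - Cᵀ * A) (Aᵀ * D - Cᵀ * B - 1)
        (Bᵀ * C - Dᵀ * A + 1) (Bᵀ * D - Dᵀ * B) := by
  simp only [Omega, Jmat, fromBlocks_transpose, fromBlocks_multiply, sub_eq_add_neg,
    fromBlocks_neg, fromBlocks_add]
  congr 1 <;> noncomm_ring

lemma inv_sub_schurComplement_eq {n : ℕ} (A11 A12 A22 : Matrix (Fin n) (Fin n) ℝ)
    (h11 : A11ᵀ = A11) (h22 : A22ᵀ = A22) (hdet : IsUnit A11.det) :
    A11⁻¹ - (A22 - A12ᵀ * A11⁻¹ * A12) =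
      ((Omega (fromBlocks A11 A12 A12ᵀ A22)).toBlocks₂₁ -
        (A11⁻¹ * A12)ᵀ * (Omega (fromBlocks A11 A12 A12ᵀ A22)).toBlocks₁₁) * A11⁻¹ := by
  have hl : A11⁻¹ * A11 = 1 := nonsing_inv_mul _ hdet
  have hr : A11 * A11⁻¹ = 1 := mul_nonsing_inv _ hdet
  rw [Omega_fromBlocks, toBlocks_fromBlocks₂₁, toBlocks_fromBlocks₁₁, transpose_mul,
    transpose_nonsing_inv, h11, h22, transpose_transpose]
  calc A11⁻¹ - (A22 - A12ᵀ * A11⁻¹ * A12)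
      = A12ᵀ * A12ᵀ * A11⁻¹ - A22 * (A11 * A11⁻¹) + A11⁻¹
          - A12ᵀ * (A11⁻¹ * A11) * A12ᵀ * A11⁻¹ + A12ᵀ * A11⁻¹ * A12 * (A11 * A11⁻¹) := by
        rw [hl, hr]; noncomm_ring
    _ = _ := by noncomm_ring

theorem stmt12_general {n : ℕ}
    (A11 A12 A22 : Matrix (Fin n) (Fin n) ℝ)
    (A : Matrix (Fin n ⊕ Fin n) (Fin n ⊕ Fin n) ℝ)
    (hA : A = fromBlocks A11 A12 A12ᵀ A22)
    (hpd : A.PosDef) :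
    specNorm (A11⁻¹ - (A22 - A12ᵀ * A11⁻¹ * A12)) ≤
      specNorm A11⁻¹ * (specNorm (A11⁻¹ * A12) + 1) * specNorm (Omega A) := by
  subst hA
  obtain ⟨h11, -, -, h22⟩ := isHermitian_fromBlocks_iff.mp hpd.isHermitian
  have hdet : IsUnit A11.det := (hpd.submatrix Sum.inl_injective).det_pos.ne'.isUnit
  simp only [specNorm_eq_l2_opNorm]
  rw [inv_sub_schurComplement_eq A11 A12 A22 (isHermitian_iff_isSymm.mp h11).eq
    (isHermitian_iff_isSymm.mp h22).eq hdet]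
  set Ω := Omega (fromBlocks A11 A12 A12ᵀ A22)
  have hΩ₁₁ : ‖Ω.toBlocks₁₁‖ ≤ ‖Ω‖ := l2_opNorm_submatrix_le Ω Sum.inl_injective Sum.inl_injective
  have hΩ₂₁ : ‖Ω.toBlocks₂₁‖ ≤ ‖Ω‖ := l2_opNorm_submatrix_le Ω Sum.inr_injective Sum.inl_injective
  calc ‖(Ω.toBlocks₂₁ - (A11⁻¹ * A12)ᵀ * Ω.toBlocks₁₁) * A11⁻¹‖
      ≤ (‖Ω.toBlocks₂₁‖ + ‖A11⁻¹ * A12‖ * ‖Ω.toBlocks₁₁‖) * ‖A11⁻¹‖ := by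
        refine (l2_opNorm_mul _ _).trans (mul_le_mul_of_nonneg_right ?_ (norm_nonneg _))
        refine (norm_sub_le _ _).trans (add_le_add_right ?_ _)
        simpa only [← conjTranspose_eq_transpose_of_trivial, l2_opNorm_conjTranspose]
          using l2_opNorm_mul (A11⁻¹ * A12)ᵀ Ω.toBlocks₁₁
    _ ≤ (‖Ω‖ + ‖A11⁻¹ * A12‖ * ‖Ω‖) * ‖A11⁻¹‖ := by gcongr
    _ = ‖A11⁻¹‖ * (‖A11⁻¹ * A12‖ + 1) * ‖Ω‖ := by ring

/-- ‖A₁₁⁻¹ − S‖₂ ≤ ‖A₁₁⁻¹‖₂ (‖W‖₂ + 1) ‖Ω(A)‖₂ with W = A₁₁⁻¹A₁₂ and S the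
Schur complement of A₁₁ in A. -/
theorem stmt12 {n : ℕ} (hn : 1 ≤ n)
    (A11 A12 A22 : Matrix (Fin n) (Fin n) ℝ)
    (A : Matrix (Fin n ⊕ Fin n) (Fin n ⊕ Fin n) ℝ)
    (hA : A = fromBlocks A11 A12 A12ᵀ A22)
    (hpd : A.PosDef) :
    specNorm (A11⁻¹ - (A22 - A12ᵀ * A11⁻¹ * A12)) ≤
      specNorm A11⁻¹ * (specNorm (A11⁻¹ * A12) + 1) * specNorm (Omega A) :=
  stmt12_general A11 A12 A22 A hA hpd
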